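/- Let Σ̂ be an n×n real symmetric positive definite matrix and δ > 0. (i) For every λ > 0 and all n×n real symmetric Γ, Θ with Θ − Γ ⪯ I and Σ̂⁻¹ + λ⁻¹(Θ − Γ) ≻ 0, one has J̃(λ,Γ,Θ) ≥ λ( log det( (Σ̂⁻¹ + λ⁻¹I)⁻¹ Σ̂⁻¹ ) + δ ). (ii) Consequently, for any sequence (λ_k, Γ_k, Θ_k) satisfying these constraints with λ_k → ∞, one has J̃(λ_k, Γ_k, Θ_k) → +∞; in particular such a sequence is not an infimizing sequence for J̃. -/

import Mathlib

/-!
`J̃(λ, Γ, Θ)` is decreasing in `Θ − Γ` because `log det` is monotone on positive definite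
matrices, so under `Θ − Γ ⪯ I` it is bounded below by `J̃(λ, 0, I)`, which is the stated bound.
Writing `J̃(λ, 0, I) = λ (φ(λ⁻¹) + δ)` with `φ(t) = −log det(Σ̂⁻¹ + t I) − log det Σ̂`, continuity
of `φ` and `φ(0) = 0` give `φ(λ⁻¹) + δ → δ > 0`, so the bound grows linearly in `λ`.
-/

open Filter Topology

/-- The dual objective `J̃(λ,Γ,Θ) := λ(−log det(Ŝ⁻¹ + λ⁻¹(Θ − Γ)) − log det Ŝ + δ)`. -/
noncomputable def Jt {n : ℕ} (S : Matrix (Fin n) (Fin n) ℝ) (δ : ℝ)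
    (l : ℝ) (Γ Θ : Matrix (Fin n) (Fin n) ℝ) : ℝ :=
  l * (-Real.log ((S⁻¹ + l⁻¹ • (Θ - Γ)).det) - Real.log S.det + δ)

namespace Matrix

open scoped MatrixOrder

variable {ι : Type*} [Fintype ι] [DecidableEq ι]

theorem one_le_det_of_one_le {B : Matrix ι ι ℝ} (hB : 1 ≤ B) : 1 ≤ B.det := by
  have hBh : B.IsHermitian := by simpa using isHermitian_one.add hB.isHermitian
  have heig : ∀ i, 1 ≤ hBh.eigenvalues i := fun i =>
    (algebraMap_le_iff_le_spectrum (r := (1 : ℝ)) (a := B) hBh.isSelfAdjoint).1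
      (by simpa using hB) _ (hBh.eigenvalues_mem_spectrum_real i)
  rw [hBh.det_eq_prod_eigenvalues]
  simpa using Finset.prod_le_prod (fun _ _ => zero_le_one) fun i _ => heig i

theorem det_le_det_of_le {A B : Matrix ι ι ℝ} (hA : A.PosDef) (hAB : A ≤ B) : A.det ≤ B.det := by
  -- Conjugating by `R⁻¹ = A^{-1/2}` turns `A ≤ B` into `1 ≤ R⁻¹ B R⁻¹`,
  -- whose determinant is `det B / det A`.
  set R := CFC.sqrt A
  have hRR : R * R = A := CFC.sqrt_mul_sqrt_self A hA.posSemidef.nonneg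
  have hRunit : IsUnit R.det := by
    refine isUnit_iff_ne_zero.2 fun h => hA.det_pos.ne' ?_
    rw [← hRR, det_mul, h, zero_mul]
  have hRstar : star R⁻¹ = R⁻¹ := (nonneg_iff_posSemidef.1 (CFC.sqrt_nonneg A)).isHermitian.inv.eq
  have hA1 : R⁻¹ * A * R⁻¹ = 1 := by
    rw [← hRR, ← Matrix.mul_assoc, nonsing_inv_mul _ hRunit, one_mul, mul_nonsing_inv _ hRunit]
  have hone : 1 ≤ R⁻¹ * B * R⁻¹ := by
    simpa only [hRstar, hA1] using star_left_conjugate_le_conjugate hAB R⁻¹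
  have hB : B = R * (R⁻¹ * B * R⁻¹) * R := by
    simp only [← Matrix.mul_assoc, mul_nonsing_inv _ hRunit, one_mul]
    rw [Matrix.mul_assoc, nonsing_inv_mul _ hRunit, mul_one]
  calc A.det = A.det * 1 := (mul_one _).symm
    _ ≤ A.det * (R⁻¹ * B * R⁻¹).det :=
        mul_le_mul_of_nonneg_left (one_le_det_of_one_le hone) hA.det_pos.le
    _ = B.det := by
        conv_rhs => rw [hB, det_mul, det_mul, mul_right_comm, ← det_mul, hRR]

end Matrix

section DualObjective

open Matrix
open scoped MatrixOrder

variable {n : ℕ} {S : Matrix (Fin n) (Fin n) ℝ} {δ l : ℝ}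

theorem Jt_zero_one_le {Γ Θ : Matrix (Fin n) (Fin n) ℝ} (hl : 0 < l)
    (hΘΓ : (1 - (Θ - Γ)).PosSemidef) (hpos : (S⁻¹ + l⁻¹ • (Θ - Γ)).PosDef) :
    Jt S δ l 0 1 ≤ Jt S δ l Γ Θ := by
  have hle : S⁻¹ + l⁻¹ • (Θ - Γ) ≤ S⁻¹ + l⁻¹ • (1 - 0) := by
    rw [le_iff, sub_zero, add_sub_add_left_eq_sub, ← smul_sub]
    exact hΘΓ.smul (inv_nonneg.2 hl.le)
  have hdet := Real.log_le_log hpos.det_pos (det_le_det_of_le hpos hle)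
  unfold Jt
  gcongr

theorem Jt_zero_one_eq (hS : S.PosDef) (hl : 0 ≤ l) :
    Jt S δ l 0 1 = l * (Real.log (((S⁻¹ + l⁻¹ • 1)⁻¹ * S⁻¹).det) + δ) := by
  have hpos : (S⁻¹ + l⁻¹ • (1 : Matrix (Fin n) (Fin n) ℝ)).PosDef :=
    hS.inv.add_posSemidef (PosSemidef.one.smul (inv_nonneg.2 hl))
  rw [Jt, sub_zero, det_mul, det_nonsing_inv, det_nonsing_inv, Ring.inverse_eq_inv,
    Ring.inverse_eq_inv, Real.log_mul (inv_ne_zero hpos.det_pos.ne') (inv_ne_zero hS.det_pos.ne'),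
    Real.log_inv, Real.log_inv, sub_eq_add_neg]

theorem tendsto_Jt_zero_one_atTop (hS : S.PosDef) (hδ : 0 < δ) :
    Tendsto (fun l => Jt S δ l 0 1) atTop atTop := by
  -- `Jt S δ l 0 1 = l * (φ l⁻¹ + δ)` holds definitionally.
  set φ : ℝ → ℝ := fun t => -Real.log ((S⁻¹ + t • (1 - 0)).det) - Real.log S.det
  have hφ0 : φ 0 = 0 := by
    simp [φ, det_nonsing_inv, Ring.inverse_eq_inv, Real.log_inv]
  have hφ : ContinuousAt φ 0 := by
    have hdet : (S⁻¹ + (0 : ℝ) • (1 - 0)).det ≠ 0 := by simpa using hS.inv.det_pos.ne'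
    fun_prop (disch := exact hdet)
  have hlim : Tendsto (fun l : ℝ => φ l⁻¹ + δ) atTop (𝓝 δ) := by
    simpa [hφ0] using (hφ.tendsto.comp tendsto_inv_atTop_zero).add_const δ
  exact tendsto_id.atTop_mul_pos hδ hlim

end DualObjective

/-- Let `Ŝ ≻ 0` and `δ > 0`.
(i) For `λ > 0` and symmetric `Γ, Θ` with `Θ − Γ ⪯ I` and `Ŝ⁻¹ + λ⁻¹(Θ − Γ) ≻ 0`,
`J̃(λ,Γ,Θ) ≥ λ(log det((Ŝ⁻¹ + λ⁻¹I)⁻¹ Ŝ⁻¹) + δ)`.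
(ii) Consequently, along any sequence satisfying these constraints with `λ_k → ∞`,
`J̃(λ_k,Γ_k,Θ_k) → +∞`; in particular such a sequence is not infimizing. -/
theorem stmt8 {n : ℕ} (S : Matrix (Fin n) (Fin n) ℝ) (hS : S.PosDef)
    (δ : ℝ) (hδ : 0 < δ) :
    (∀ (l : ℝ) (Γ Θ : Matrix (Fin n) (Fin n) ℝ), 0 < l → Γ.IsSymm → Θ.IsSymm →
      (1 - (Θ - Γ)).PosSemidef → (S⁻¹ + l⁻¹ • (Θ - Γ)).PosDef →
      Jt S δ l Γ Θ ≥ l * (Real.log (((S⁻¹ + l⁻¹ • 1)⁻¹ * S⁻¹).det) + δ)) ∧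
    (∀ (l : ℕ → ℝ) (Γ Θ : ℕ → Matrix (Fin n) (Fin n) ℝ),
      (∀ k, 0 < l k) → (∀ k, (Γ k).IsSymm) → (∀ k, (Θ k).IsSymm) →
      (∀ k, (1 - (Θ k - Γ k)).PosSemidef) →
      (∀ k, (S⁻¹ + (l k)⁻¹ • (Θ k - Γ k)).PosDef) →
      Tendsto l atTop atTop →
      Tendsto (fun k => Jt S δ (l k) (Γ k) (Θ k)) atTop atTop) := by
  refine ⟨fun l Γ Θ hl _ _ hΘΓ hpos => ?_, fun l Γ Θ hl _ _ hΘΓ hpos hlim => ?_⟩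
  · rw [ge_iff_le, ← Jt_zero_one_eq hS hl.le]
    exact Jt_zero_one_le hl hΘΓ hpos
  · exact tendsto_atTop_mono (fun k => Jt_zero_one_le (hl k) (hΘΓ k) (hpos k))
      ((tendsto_Jt_zero_one_atTop hS hδ).comp hlim)
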